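/- arXiv:1604.04436 — 3 statements merged into one kernel-verified Lean document; each statement's English description precedes it below -/
import Mathlib

section
/- With S_n defined as in the recursive comb construction (S_0 the ray, S_{n+1} a spine with copies of S_n attached to each spine vertex), S_{n+1} does not embed into S_n for any n; in particular the trees S_n, n ∈ ℕ, are pairwise topologically inequivalent and form a strictly increasing ω-chain under the topological minor quasi-order. -/
/-- Vertex set of the recursive comb `S n`: `S 0` is the ray on ℕ;
`S (n+1)` has spine vertices `(i, none)` and branch vertices `(i, some x)`
for `x` a vertex of `S n` (the copy of `S n` attached above spine vertex `i`). -/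
def Vtx : ℕ → Type
  | 0 => ℕ
  | n + 1 => ℕ × Option (Vtx n)

/-- The tree order on `S n`. -/
def Sle : (n : ℕ) → Vtx n → Vtx n → Prop
  | 0 => fun a b => Nat.le a b
  | n + 1 => fun a b =>
    match a, b with
    | (i, none), (j, none) => i ≤ j
    | (i, none), (j, some _) => i ≤ j
    | (_, some _), (_, none) => False
    | (i, some x), (j, some y) => i = j ∧ Sle n x y

/-- `S m` embeds into `S n` as a topological minor. -/
def SEmbeds (m n : ℕ) : Prop :=
  ∃ f : Vtx m → Vtx n, Function.Injective f ∧ ∀ a b, Sle m a b ↔ Sle n (f a) (f b)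

/-- Constructor for vertices of `S (n+1)`. -/
def mkV (n : ℕ) (i : ℕ) (o : Option (Vtx n)) : Vtx (n + 1) := (i, o)

/-!
An embedding `S (n+2) ↪ S (n+1)` must send every vertex that lies below a copy of `S (n+1)` to a
spine vertex: otherwise the whole copy lands in the single branch `S n` above that image, which
the induction hypothesis forbids. The spine vertex `1` lies below the branch attached to it, and
each spine vertex `a` of the branch above `0` lies below a shifted copy of that branch; none of the
latter is above the former, so infinitely many vertices would go injectively to the finitely many
spine vertices below the image of `1`. For `n = 0`, `S 1` has incomparable vertices and `S 0` is a
chain.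
-/

theorem sEmbeds_iff_nonempty_relEmbedding {m n : ℕ} :
    SEmbeds m n ↔ Nonempty (Sle m ↪r Sle n) :=
  ⟨fun ⟨f, hf, hfo⟩ => ⟨⟨⟨f, hf⟩, fun {a b} => (hfo a b).symm⟩⟩,
    fun ⟨e⟩ => ⟨e, e.injective, fun _ _ => e.map_rel_iff.symm⟩⟩

theorem SEmbeds.trans {m n p : ℕ} (h₁ : SEmbeds m n) (h₂ : SEmbeds n p) : SEmbeds m p := by
  rw [sEmbeds_iff_nonempty_relEmbedding] at *
  exact ⟨h₁.some.trans h₂.some⟩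

theorem mkV_inj {n i j : ℕ} {o o' : Option (Vtx n)} : mkV n i o = mkV n j o' ↔ i = j ∧ o = o' :=
  Prod.mk_inj

theorem sle_mkV_none_left (n i j : ℕ) (o : Option (Vtx n)) :
    Sle (n + 1) (mkV n i none) (mkV n j o) ↔ i ≤ j := by
  cases o <;> rfl

theorem sle_mkV_some (n i j : ℕ) (x y : Vtx n) :
    Sle (n + 1) (mkV n i (some x)) (mkV n j (some y)) ↔ i = j ∧ Sle n x y :=
  Iff.rfl

def branchEmbedding (n i : ℕ) : Sle n ↪r Sle (n + 1) where
  toFun v := mkV n i (some v)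
  inj' _ _ h := Option.some_injective _ (mkV_inj.1 h).2
  map_rel_iff' := and_iff_right rfl

def spineShift (n a : ℕ) : Sle (n + 1) ↪r Sle (n + 1) where
  toFun := fun ⟨i, o⟩ => mkV n (i + a) o
  inj' := fun ⟨i, o⟩ ⟨j, o'⟩ h => by
    obtain ⟨hij, rfl⟩ := mkV_inj.1 h
    rw [Nat.add_right_cancel hij]
  map_rel_iff' := by
    rintro ⟨i, _ | x⟩ ⟨j, _ | y⟩
    · exact Nat.add_le_add_iff_right
    · exact Nat.add_le_add_iff_right
    · exact Iff.rfl
    · exact and_congr_left' Nat.add_right_cancel_iff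

theorem sle_spineShift (n a : ℕ) (v : Vtx (n + 1)) :
    Sle (n + 1) (mkV n a none) (spineShift n a v) := by
  obtain ⟨i, o⟩ := v
  exact (sle_mkV_none_left n a (i + a) o).2 (Nat.le_add_left a i)

theorem exists_eq_mkV_some_of_sle {n k : ℕ} {y : Vtx n} {w : Vtx (n + 1)}
    (h : Sle (n + 1) (mkV n k (some y)) w) : ∃ z, w = mkV n k (some z) := by
  obtain ⟨j, _ | z⟩ := w
  · exact h.elim
  · exact ⟨z, by rw [h.1]; rfl⟩

theorem sEmbeds_of_forall_sle_mkV_some {m n k : ℕ} {y : Vtx n} (f : Sle m ↪r Sle (n + 1))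
    (hf : ∀ v, Sle (n + 1) (mkV n k (some y)) (f v)) : SEmbeds m n := by
  choose g hg using fun v => exists_eq_mkV_some_of_sle (hf v)
  refine ⟨g, fun a b hab => f.injective (by rw [hg a, hg b, hab]), fun a b => ?_⟩
  rw [← f.map_rel_iff, hg a, hg b, sle_mkV_some, and_iff_right rfl]

theorem exists_eq_mkV_none_of_forall_sle {m n p : ℕ} (hp : ¬ SEmbeds p n)
    (f : Sle m ↪r Sle (n + 1)) (e : Sle p ↪r Sle m) {b : Vtx m} (he : ∀ v, Sle m b (e v)) :
    ∃ i, f b = mkV n i none := by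
  rcases hfb : f b with ⟨i, _ | y⟩
  · exact ⟨i, rfl⟩
  · refine absurd (sEmbeds_of_forall_sle_mkV_some (k := i) (y := y) (e.trans f) fun v => ?_) hp
    have h := f.map_rel_iff.2 (he v)
    rwa [hfb] at h

theorem not_sEmbeds_one_zero : ¬ SEmbeds 1 0 := by
  rintro ⟨f, -, hf⟩
  let v (i : ℕ) : Vtx 1 := mkV 0 i (some (0 : ℕ))
  have incomparable : ∀ i j, i ≠ j → ¬ Sle 1 (v i) (v j) := fun i j hij h => hij h.1
  rcases le_total (α := ℕ) (f (v 0)) (f (v 1)) with h | h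
  · exact incomparable 0 1 zero_ne_one ((hf _ _).2 h)
  · exact incomparable 1 0 one_ne_zero ((hf _ _).2 h)

theorem not_sEmbeds_succ_succ {n : ℕ} (ih : ¬ SEmbeds (n + 1) n) : ¬ SEmbeds (n + 2) (n + 1) := by
  rw [sEmbeds_iff_nonempty_relEmbedding]
  rintro ⟨f⟩
  have spine {b : Vtx (n + 2)} (e : Sle (n + 1) ↪r Sle (n + 2)) (he : ∀ v, Sle (n + 2) b (e v)) :
      ∃ i, f b = mkV n i none :=
    exists_eq_mkV_none_of_forall_sle ih f e he
  obtain ⟨σ, hσ⟩ := spine (b := mkV (n + 1) 1 none) (branchEmbedding (n + 1) 1) fun _ => le_rfl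
  let c (a : ℕ) : Vtx (n + 2) := mkV (n + 1) 0 (some (mkV n a none))
  choose K hK using fun a =>
    spine (b := c a) ((spineShift n a).trans (branchEmbedding (n + 1) 0)) fun v =>
      ⟨rfl, sle_spineShift n a v⟩
  have hK_inj : Function.Injective K := fun a b hab => by
    have := f.injective ((hK a).trans (hab ▸ (hK b).symm))
    exact (mkV_inj.1 (Option.some_injective _ (mkV_inj.1 this).2)).1
  have hK_lt (a : ℕ) : K a < σ := by
    have : ¬ Sle (n + 2) (mkV (n + 1) 1 none) (c a) := by
      rw [sle_mkV_none_left]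
      omega
    rw [← f.map_rel_iff, hσ, hK a, sle_mkV_none_left] at this
    omega
  exact Set.infinite_range_of_injective hK_inj
    ((Set.finite_lt_nat σ).subset (Set.range_subset_iff.2 hK_lt))

theorem not_sEmbeds_succ (n : ℕ) : ¬ SEmbeds (n + 1) n := by
  induction n with
  | zero => exact not_sEmbeds_one_zero
  | succ n ih => exact not_sEmbeds_succ_succ ih

theorem sEmbeds_succ (n : ℕ) : SEmbeds n (n + 1) :=
  sEmbeds_iff_nonempty_relEmbedding.2 ⟨branchEmbedding n 0⟩

theorem sEmbeds_of_le {m n : ℕ} (h : m ≤ n) : SEmbeds m n := by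
  induction h with
  | refl => exact sEmbeds_iff_nonempty_relEmbedding.2 ⟨RelEmbedding.refl _⟩
  | step _ ih => exact ih.trans (sEmbeds_succ _)

/-- S_(n+1) never embeds into S_n; the trees S_n are pairwise topologically
inequivalent and form a strictly increasing ω-chain under the topological
minor quasi-order. -/
theorem S_chain_strict :
    (∀ n : ℕ, ¬ SEmbeds (n + 1) n) ∧
    (∀ m n : ℕ, m ≠ n → ¬ (SEmbeds m n ∧ SEmbeds n m)) ∧
    (∀ n : ℕ, SEmbeds n (n + 1)) := by
  refine ⟨not_sEmbeds_succ, fun m n hmn ⟨hmn', hnm'⟩ => ?_, sEmbeds_succ⟩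
  rcases hmn.lt_or_gt with h | h
  · exact not_sEmbeds_succ m ((sEmbeds_of_le h).trans hnm')
  · exact not_sEmbeds_succ n ((sEmbeds_of_le h).trans hmn')
end

section
/- Suppose T is the tree S_{n+1} (a spine with a copy of S_n at each spine vertex) and φ : S_{n+1} → S_{n+1} is an embedding. If a vertex of the i-th branch copy of S_n is mapped by φ to a spine vertex p, then every branch of S_{n+1} attached at a spine vertex j > i must be mapped into the (finitely many) branches attached at spine vertices strictly below p together with p's predecessors; in particular only finitely many spine positions are available above the images of later branches. -/
/-
Branch vertices attached at different spine vertices are incomparable, and an embedding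
preserves incomparability. The vertices of `S (n+1)` incomparable with the spine vertex `p`
are exactly the branch vertices attached strictly below `p`, so the image of any vertex of a
later branch lies in such a branch.
-/

def Incomparable (n : ℕ) (a b : Vtx n) : Prop :=
  ¬ Sle n a b ∧ ¬ Sle n b a

theorem Incomparable.map {n m : ℕ} {f : Vtx n → Vtx m}
    (hemb : ∀ a b : Vtx n, Sle n a b ↔ Sle m (f a) (f b)) {a b : Vtx n}
    (h : Incomparable n a b) : Incomparable m (f a) (f b) :=
  ⟨fun hab => h.1 ((hemb a b).mpr hab), fun hba => h.2 ((hemb b a).mpr hba)⟩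

theorem incomparable_branch_of_ne (n : ℕ) {i j : ℕ} (hij : i ≠ j) (x y : Vtx n) :
    Incomparable (n + 1) (mkV n i (some x)) (mkV n j (some y)) :=
  ⟨fun h => hij h.1, fun h => hij h.1.symm⟩

theorem incomparable_spine_iff (n p : ℕ) (a : Vtx (n + 1)) :
    Incomparable (n + 1) a (mkV n p none) ↔ ∃ q < p, ∃ z : Vtx n, a = mkV n q (some z) := by
  obtain ⟨q, o | z⟩ := a
  · refine ⟨fun ⟨hqp, hpq⟩ => absurd (le_total q p) (not_or.mpr ⟨hqp, hpq⟩), ?_⟩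
    rintro ⟨_, _, _, h⟩
    cases h
  · refine ⟨fun ⟨_, hpq⟩ => ⟨q, not_le.mp hpq, z, rfl⟩, ?_⟩
    rintro ⟨q', hqp, z', h⟩
    cases h
    exact ⟨not_false, not_le.mpr hqp⟩

theorem branch_to_spine_blocks_later_branches_general
    (n : ℕ) (f : Vtx (n + 1) → Vtx (n + 1))
    (hemb : ∀ a b : Vtx (n + 1), Sle (n + 1) a b ↔ Sle (n + 1) (f a) (f b))
    (i p : ℕ) (x : Vtx n)
    (hfx : f (mkV n i (some x)) = mkV n p none) :
    ∀ j : ℕ, i < j → ∀ y : Vtx n, ∃ q : ℕ, q < p ∧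
      (f (mkV n j (some y)) = mkV n q none ∨
        ∃ z : Vtx n, f (mkV n j (some y)) = mkV n q (some z)) := by
  intro j hij y
  have hincomp := (incomparable_branch_of_ne n hij.ne' y x).map hemb
  rw [hfx, incomparable_spine_iff] at hincomp
  obtain ⟨q, hqp, z, hz⟩ := hincomp
  exact ⟨q, hqp, Or.inr ⟨z, hz⟩⟩

/-- If an embedding of S_(n+1) into itself maps a vertex of the i-th branch copy
of S_n to a spine vertex p, then every vertex of any branch attached at a spine
vertex j > i is mapped strictly below level p: to a spine vertex q < p (a
predecessor of p) or into a branch attached at a spine vertex q < p. -/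
theorem branch_to_spine_blocks_later_branches
    (n : ℕ) (f : Vtx (n + 1) → Vtx (n + 1))
    (hinj : Function.Injective f)
    (hemb : ∀ a b : Vtx (n + 1), Sle (n + 1) a b ↔ Sle (n + 1) (f a) (f b))
    (i p : ℕ) (x : Vtx n)
    (hfx : f (mkV n i (some x)) = mkV n p none) :
    ∀ j : ℕ, i < j → ∀ y : Vtx n, ∃ q : ℕ, q < p ∧
      (f (mkV n j (some y)) = mkV n q none ∨
        ∃ z : Vtx n, f (mkV n j (some y)) = mkV n q (some z)) :=
  branch_to_spine_blocks_later_branches_general n f hemb i p x hfx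
end

section
/- There exist uncountably many (at least ℵ₁) pairwise non-equivalent countable rooted trees under the topological minor relation; concretely, there is a family (T_α)_{α < ω₁} of rooted locally finite trees such that for all α < β < ω₁, T_α ⪯ T_β and T_β ⪯̸ T_α. -/
/-- A rooted tree: a partial order with a least element (the root)
where every vertex has a finite chain of predecessors. -/
structure RTree where
  V : Type
  le : V → V → Prop
  le_refl : ∀ a, le a a
  le_antisymm : ∀ a b, le a b → le b a → a = b
  le_trans : ∀ a b c, le a b → le b c → le a c
  root : V
  root_le : ∀ v, le root v
  pred_fin : ∀ v, {w | le w v}.Finite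
  pred_chain : ∀ v a b, le a v → le b v → le a b ∨ le b a

/-- `w` is an immediate successor of `v`. -/
def RTree.ImmSucc (T : RTree) (v w : T.V) : Prop :=
  T.le v w ∧ v ≠ w ∧ ∀ u, T.le v u → T.le u w → u = v ∨ u = w

/-- Locally finite: every vertex has finitely many immediate successors. -/
def RTree.LocFin (T : RTree) : Prop := ∀ v, {w | T.ImmSucc v w}.Finite

/-- Topological-minor embedding: an injective order-embedding. -/
def RTree.Embeds (T U : RTree) : Prop :=
  ∃ f : T.V → U.V, Function.Injective f ∧ ∀ a b, T.le a b ↔ U.le (f a) (f b)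

/-!
`tower α` is a comb: a spine ray `0 < 1 < 2 < ⋯` with a tree hung above each spine vertex, the
trees being copies of `tower δ` for `δ < α` — all of them `tower δ` if `α = δ + 1`, and an
enumeration of all `δ < α` if `α` is a countable limit; `tower 0` is a single point, so `tower 1`
is a ray with a leaf at each vertex. Hanging every smaller level makes the towers increasing.

For strictness, an embedding of one comb into another cannot send the roots of branches `0` and
`1` to the spine, since spine vertex `1` lies below the root of branch `1` but is incomparable to
the root of branch `0`; so a whole branch of the first comb lands in a single branch of the
second. For a least `α` with `tower (α + 1) ⪯ tower α` this gives `tower α ⪯ tower δ` with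
`δ < α`, whence `tower (δ + 1) ⪯ tower α ⪯ tower δ`.
-/

namespace RTree

theorem Embeds.refl (T : RTree) : T.Embeds T :=
  ⟨id, Function.injective_id, fun _ _ => Iff.rfl⟩

theorem Embeds.trans {T U W : RTree} (hTU : T.Embeds U) (hUW : U.Embeds W) : T.Embeds W := by
  obtain ⟨f, hf, hfle⟩ := hTU
  obtain ⟨g, hg, hgle⟩ := hUW
  exact ⟨g ∘ f, hg.comp hf, fun a b => (hfle a b).trans (hgle (f a) (f b))⟩

def point : RTree where
  V := Unit
  le _ _ := True
  le_refl _ := trivial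
  le_antisymm _ _ _ _ := rfl
  le_trans _ _ _ _ _ := trivial
  root := ()
  root_le _ := trivial
  pred_fin _ := Set.toFinite _
  pred_chain _ _ _ _ _ := Or.inl trivial

theorem locFin_point : point.LocFin := fun _ => (Set.finite_singleton ()).subset fun _ _ => rfl

section Comb

variable (S : ℕ → RTree)

inductive CombLE : ℕ ⊕ (Σ n, (S n).V) → ℕ ⊕ (Σ n, (S n).V) → Prop
  | spine {m n : ℕ} : m ≤ n → CombLE (.inl m) (.inl n)
  | spine_branch {m n : ℕ} {x : (S n).V} : m ≤ n → CombLE (.inl m) (.inr ⟨n, x⟩)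
  | branch {n : ℕ} {x y : (S n).V} : (S n).le x y → CombLE (.inr ⟨n, x⟩) (.inr ⟨n, y⟩)

variable {S}

@[simp] theorem combLE_inl_inr {m n : ℕ} {x : (S n).V} :
    CombLE S (.inl m) (.inr ⟨n, x⟩) ↔ m ≤ n :=
  ⟨by rintro ⟨⟩; assumption, .spine_branch⟩

@[simp] theorem not_combLE_inr_inl {p : Σ n, (S n).V} {m : ℕ} :
    ¬ CombLE S (.inr p) (.inl m) := by
  rintro ⟨⟩

@[simp] theorem combLE_inr_inr {n : ℕ} {x y : (S n).V} :
    CombLE S (.inr ⟨n, x⟩) (.inr ⟨n, y⟩) ↔ (S n).le x y :=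
  ⟨by rintro ⟨⟩; assumption, .branch⟩

theorem combLE_inr_iff {n : ℕ} {x : (S n).V} {w : ℕ ⊕ Σ n, (S n).V} :
    CombLE S (.inr ⟨n, x⟩) w ↔ ∃ y, w = .inr ⟨n, y⟩ ∧ (S n).le x y := by
  constructor
  · rintro ⟨⟩
    exact ⟨_, rfl, by assumption⟩
  · rintro ⟨y, rfl, h⟩
    exact .branch h

theorem CombLE.refl : ∀ v, CombLE S v v
  | .inl _ => .spine le_rfl
  | .inr ⟨_, x⟩ => .branch ((S _).le_refl x)

theorem CombLE.antisymm {v w : ℕ ⊕ Σ n, (S n).V} :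
    CombLE S v w → CombLE S w v → v = w := by
  rintro (h | h | h) h' <;> cases h'
  · rw [Nat.le_antisymm h ‹_›]
  · rw [(S _).le_antisymm _ _ h ‹_›]

theorem CombLE.trans {u v w : ℕ ⊕ Σ n, (S n).V} :
    CombLE S u v → CombLE S v w → CombLE S u w := by
  rintro (h | h | h) h' <;> cases h'
  · exact .spine (h.trans ‹_›)
  · exact .spine_branch (h.trans ‹_›)
  · exact .spine_branch h
  · exact .branch ((S _).le_trans _ _ _ h ‹_›)

theorem CombLE.total_of_le {u v w : ℕ ⊕ Σ n, (S n).V} :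
    CombLE S u w → CombLE S v w → CombLE S u v ∨ CombLE S v u := by
  rintro (h | h | h) h' <;> cases h'
  · exact (le_total _ _).imp .spine .spine
  · exact (le_total _ _).imp .spine .spine
  · exact .inl (.spine_branch h)
  · exact .inr (.spine_branch ‹_›)
  · exact ((S _).pred_chain _ _ _ h ‹_›).imp .branch .branch

theorem finite_setOf_combLE (w : ℕ ⊕ Σ n, (S n).V) : {v | CombLE S v w}.Finite := by
  rcases w with n | ⟨n, x⟩
  · refine ((Set.finite_Iic n).image Sum.inl).subset ?_
    rintro _ ⟨⟩
    exact ⟨_, ‹_›, rfl⟩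
  · refine ((Set.finite_Iic n).image Sum.inl).union
      ((((S n).pred_fin x).image (Sigma.mk n)).image Sum.inr) |>.subset ?_
    rintro _ ⟨⟩
    · exact .inl ⟨_, ‹_›, rfl⟩
    · exact .inr ⟨_, ⟨_, ‹_›, rfl⟩, rfl⟩

variable (S) in
abbrev comb : RTree where
  V := ℕ ⊕ Σ n, (S n).V
  le := CombLE S
  le_refl := CombLE.refl
  le_antisymm _ _ := CombLE.antisymm
  le_trans _ _ _ := CombLE.trans
  root := .inl 0
  root_le
    | .inl _ => .spine (Nat.zero_le _)
    | .inr _ => .spine_branch (Nat.zero_le _)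
  pred_fin := finite_setOf_combLE
  pred_chain _ _ _ := CombLE.total_of_le

theorem locFin_comb (hS : ∀ n, (S n).LocFin) : (comb S).LocFin := by
  rintro (m | ⟨n, x⟩)
  · refine ((Set.finite_singleton (.inr ⟨m, (S m).root⟩)).insert (.inl (m + 1))).subset ?_
    rintro w ⟨hle, hne, hmin⟩
    cases hle with
    | spine hmk =>
      obtain rfl | hmk := hmk.eq_or_lt
      · exact absurd rfl hne
      · have := hmin (.inl (m + 1)) (.spine m.le_succ) (.spine hmk)
        simp_all
    | spine_branch hmk =>
      obtain rfl | hmk := hmk.eq_or_lt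
      · have := hmin (.inr ⟨m, (S m).root⟩) (.spine_branch le_rfl) (.branch ((S m).root_le _))
        simp_all
      · have := hmin (.inl (m + 1)) (.spine m.le_succ) (.spine_branch hmk)
        simp_all
  · refine ((hS n x).image fun y => (.inr ⟨n, y⟩ : (comb S).V)).subset ?_
    rintro w ⟨hle, hne, hmin⟩
    obtain ⟨y, rfl, hxy⟩ := combLE_inr_iff.1 hle
    refine ⟨y, ⟨hxy, fun hxy' => hne (by rw [hxy']), fun u hxu huy => ?_⟩, rfl⟩
    simpa using hmin (.inr ⟨n, u⟩) (.branch hxu) (.branch huy)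

theorem countable_comb [∀ n, Countable (S n).V] : Countable (comb S).V :=
  inferInstanceAs (Countable (ℕ ⊕ Σ n, (S n).V))

variable (S) in
theorem embeds_comb (n : ℕ) : (S n).Embeds (comb S) :=
  ⟨fun x => .inr ⟨n, x⟩, fun x y h => by simpa using h, fun _ _ => combLE_inr_inr.symm⟩

theorem not_comb_embeds_point : ¬ (comb S).Embeds point := by
  rintro ⟨f, hf, -⟩
  exact Sum.inl_injective.ne Nat.zero_ne_one (hf (a₁ := .inl 0) (a₂ := .inl 1) rfl)

section OrderEmbedding

variable {S' : ℕ → RTree} {f : (comb S).V → (comb S').V}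

theorem embeds_of_map_root_eq_inr (hf : Function.Injective f)
    (hfle : ∀ a b, (comb S).le a b ↔ (comb S').le (f a) (f b)) {n m : ℕ} {y : (S' m).V}
    (hy : f (.inr ⟨n, (S n).root⟩) = .inr ⟨m, y⟩) : (S n).Embeds (S' m) := by
  have hbranch : ∀ x : (S n).V, ∃ z, f (.inr ⟨n, x⟩) = .inr ⟨m, z⟩ := fun x => by
    have := (hfle _ _).1 (.branch ((S n).root_le x))
    rw [hy] at this
    obtain ⟨z, hz, -⟩ := combLE_inr_iff.1 this
    exact ⟨z, hz⟩
  choose g hg using hbranch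
  refine ⟨g, fun a b hab => ?_, fun a b => ?_⟩
  · have hfab : f (.inr ⟨n, a⟩) = f (.inr ⟨n, b⟩) := by rw [hg, hg, hab]
    simpa using hf hfab
  · calc (S n).le a b ↔ CombLE S (.inr ⟨n, a⟩) (.inr ⟨n, b⟩) := combLE_inr_inr.symm
      _ ↔ CombLE S' (.inr ⟨m, g a⟩) (.inr ⟨m, g b⟩) := by
        rw [← hg, ← hg]; exact hfle _ _
      _ ↔ (S' m).le (g a) (g b) := combLE_inr_inr

theorem exists_map_root_eq_inr (hfle : ∀ a b, (comb S).le a b ↔ (comb S').le (f a) (f b)) :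
    ∃ n m y, f (.inr ⟨n, (S n).root⟩) = .inr ⟨m, y⟩ := by
  by_contra! hspine
  obtain ⟨a, ha⟩ : ∃ a, f (.inr ⟨0, (S 0).root⟩) = .inl a := by
    rcases h : f (.inr ⟨0, (S 0).root⟩) with a | ⟨m, y⟩
    · exact ⟨a, rfl⟩
    · exact absurd h (hspine 0 m y)
  obtain ⟨c, hc⟩ : ∃ c, f (.inl 1) = .inl c := by
    rcases h : f (.inl 1) with c | ⟨m, y⟩
    · exact ⟨c, rfl⟩
    · have := (hfle (.inl 1) (.inr ⟨1, (S 1).root⟩)).1 (.spine_branch le_rfl)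
      rw [h] at this
      obtain ⟨z, hz, -⟩ := combLE_inr_iff.1 this
      exact absurd hz (hspine 1 m z)
  rcases le_total c a with hca | hac
  · have := (hfle (.inl 1) (.inr ⟨0, (S 0).root⟩)).2 (by rw [hc, ha]; exact .spine hca)
    simp at this
  · exact not_combLE_inr_inl
      ((hfle (.inr ⟨0, (S 0).root⟩) (.inl 1)).2 (by rw [hc, ha]; exact .spine hac))

end OrderEmbedding

theorem exists_embeds_of_comb_embeds_comb {S' : ℕ → RTree} (h : (comb S).Embeds (comb S')) :
    ∃ n m, (S n).Embeds (S' m) := by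
  obtain ⟨f, hf, hfle⟩ := h
  obtain ⟨n, m, y, hy⟩ := exists_map_root_eq_inr hfle
  exact ⟨n, m, embeds_of_map_root_eq_inr hf hfle hy⟩

end Comb

end RTree

open Cardinal

theorem Ordinal.countable_Iio_of_lt_ord_aleph_one {α : Ordinal} (hα : α < (ℵ_ 1).ord) :
    (Set.Iio α).Countable := by
  rwa [← le_aleph0_iff_set_countable, Cardinal.mk_Iio_ordinal, lift_le_aleph0,
    ← Order.lt_succ_iff, succ_aleph0, ← lt_ord]

open Classical in
/-- An enumeration of `Set.Iio α` when that set is countable and nonempty; junk `0` otherwise. -/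
noncomputable def enumBelow (α : Ordinal) : ℕ → Ordinal :=
  if h : (Set.Iio α).Countable ∧ (Set.Iio α).Nonempty then (h.1.exists_eq_range h.2).choose
  else fun _ => 0

theorem enumBelow_lt {α : Ordinal} (hα : 0 < α) (n : ℕ) : enumBelow α n < α := by
  rw [enumBelow]
  split_ifs with h
  · exact (h.1.exists_eq_range h.2).choose_spec.ge (Set.mem_range_self n)
  · exact hα

theorem mem_range_enumBelow {α γ : Ordinal} (hα : α < (ℵ_ 1).ord) (hγ : γ < α) :
    γ ∈ Set.range (enumBelow α) := by
  have h : (Set.Iio α).Countable ∧ (Set.Iio α).Nonempty :=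
    ⟨Ordinal.countable_Iio_of_lt_ord_aleph_one hα, γ, hγ⟩
  rw [enumBelow, dif_pos h]
  exact (h.1.exists_eq_range h.2).choose_spec.le hγ

namespace RTree

noncomputable def tower (α : Ordinal) : RTree :=
  Ordinal.limitRecOn α point (fun _ T => comb fun _ => T)
    fun α hα T => comb fun n => T (enumBelow α n) (enumBelow_lt hα.pos n)

theorem tower_zero : tower 0 = point :=
  Ordinal.limitRecOn_zero ..

theorem tower_add_one (α : Ordinal) : tower (α + 1) = comb fun _ => tower α :=
  Ordinal.limitRecOn_add_one ..

theorem tower_of_isSuccLimit {α : Ordinal} (hα : Order.IsSuccLimit α) :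
    tower α = comb fun n => tower (enumBelow α n) :=
  Ordinal.limitRecOn_limit _ _ _ _ hα

theorem exists_tower_eq_comb {α : Ordinal} (hα : α ≠ 0) :
    ∃ d : ℕ → Ordinal, (∀ n, d n < α) ∧ tower α = comb fun n => tower (d n) := by
  induction α using Ordinal.limitRecOn with
  | zero => exact absurd rfl hα
  | add_one δ _ => exact ⟨fun _ => δ, fun _ => lt_add_one δ, tower_add_one δ⟩
  | limit α hlim _ => exact ⟨enumBelow α, enumBelow_lt hlim.pos, tower_of_isSuccLimit hlim⟩

theorem locFin_tower (α : Ordinal) : (tower α).LocFin := by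
  induction α using Ordinal.limitRecOn with
  | zero => rw [tower_zero]; exact locFin_point
  | add_one α ih => rw [tower_add_one]; exact locFin_comb fun _ => ih
  | limit α hα ih =>
    rw [tower_of_isSuccLimit hα]
    exact locFin_comb fun n => ih _ (enumBelow_lt hα.pos n)

theorem countable_tower (α : Ordinal) : Countable (tower α).V := by
  induction α using Ordinal.limitRecOn with
  | zero => rw [tower_zero]; exact inferInstanceAs (Countable Unit)
  | add_one α ih => rw [tower_add_one]; exact countable_comb
  | limit α hα ih =>
    rw [tower_of_isSuccLimit hα]
    have := fun n => ih _ (enumBelow_lt hα.pos n)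
    exact countable_comb

theorem tower_embeds_tower_of_le {γ α : Ordinal} (hα : α < (ℵ_ 1).ord) (hγα : γ ≤ α) :
    (tower γ).Embeds (tower α) := by
  induction α using Ordinal.limitRecOn generalizing γ with
  | zero => rw [nonpos_iff_eq_zero.1 hγα]; exact .refl _
  | add_one δ ih =>
    obtain rfl | hγδ := hγα.eq_or_lt
    · exact .refl _
    rw [tower_add_one]
    exact (ih ((lt_add_one δ).trans hα) (Order.lt_add_one_iff.1 hγδ)).trans
      (embeds_comb (fun _ => tower δ) 0)
  | limit α hlim _ =>
    obtain rfl | hγα := hγα.eq_or_lt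
    · exact .refl _
    obtain ⟨n, rfl⟩ := mem_range_enumBelow hα hγα
    rw [tower_of_isSuccLimit hlim]
    exact embeds_comb (fun n => tower (enumBelow α n)) n

theorem not_tower_add_one_embeds {α : Ordinal} (hα : α < (ℵ_ 1).ord) :
    ¬ (tower (α + 1)).Embeds (tower α) := by
  induction α using WellFoundedLT.induction with
  | _ α ih =>
    intro h
    obtain rfl | hα0 := eq_or_ne α 0
    · rw [tower_add_one, tower_zero] at h
      exact not_comb_embeds_point h
    obtain ⟨d, hd, hdeq⟩ := exists_tower_eq_comb hα0
    rw [hdeq, tower_add_one] at h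
    obtain ⟨-, m, hm⟩ := exists_embeds_of_comb_embeds_comb h
    exact ih (d m) (hd m) ((hd m).trans hα)
      ((tower_embeds_tower_of_le hα (Order.add_one_le_of_lt (hd m))).trans hm)

end RTree

/-- There is a family of ω₁ many countable rooted locally finite trees that is
strictly increasing under the topological minor relation; in particular there
are at least ℵ₁ pairwise non-equivalent such trees. -/
theorem exists_omega1_chain_of_topological_types :
    ∃ T : Ordinal → RTree,
      (∀ α : Ordinal, α < (Cardinal.aleph 1).ord →
        (T α).LocFin ∧ Countable (T α).V) ∧
      ∀ α β : Ordinal, α < β → β < (Cardinal.aleph 1).ord →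
        (T α).Embeds (T β) ∧ ¬ (T β).Embeds (T α) := by
  refine ⟨RTree.tower, fun α _ => ⟨RTree.locFin_tower α, RTree.countable_tower α⟩,
    fun α β hαβ hβ => ⟨RTree.tower_embeds_tower_of_le hβ hαβ.le, fun hβα => ?_⟩⟩
  have hsucc : (RTree.tower (α + 1)).Embeds (RTree.tower β) :=
    RTree.tower_embeds_tower_of_le hβ (Order.add_one_le_of_lt hαβ)
  exact RTree.not_tower_add_one_embeds (hαβ.trans hβ) (hsucc.trans hβα)
end
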